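/- arXiv:2112.14557 — 7 statements merged into one kernel-verified Lean document; each statement's English description precedes it below -/
import Mathlib

section
/- For every real number r with 0 < r ≤ 1/2, (e^{πr} − 1)/((πr + 1)·e^{3πr} − 1) ≥ e^{−9π/5}. -/
theorem stmt_1 (r : ℝ) (h0 : 0 < r) (h1 : r ≤ 1 / 2) :
    (Real.exp (Real.pi * r) - 1) / ((Real.pi * r + 1) * Real.exp (3 * Real.pi * r) - 1) ≥
      Real.exp (-(9 * Real.pi / 5)) := by
  have hp : (3:ℝ) < Real.pi := Real.pi_gt_three
  have hp4 : Real.pi < 3.15 := by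
    have := Real.pi_lt_d2
    linarith
  set t := Real.pi * r with ht
  have ht0 : 0 < t := mul_pos Real.pi_pos h0
  have ht1 : t ≤ Real.pi / 2 := by
    rw [ht]; nlinarith [Real.pi_pos]
  set u := Real.exp t with hu
  have hu1 : 1 < u := by have := Real.add_one_le_exp t; linarith
  have hut : t + 1 ≤ u := by
    have := Real.add_one_le_exp t
    linarith
  have e3 : Real.exp (3 * Real.pi * r) = u ^ 3 := by
    rw [show 3 * Real.pi * r = t + (t + t) by rw [ht]; ring, Real.exp_add, Real.exp_add, hu]
    ring
  -- bound S := u^3 + u^2 + u + 1 ≤ exp (9π/5)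
  have hb : 1 + Real.pi / 2 ≤ Real.exp (Real.pi / 2) := by have := Real.add_one_le_exp (Real.pi / 2); linarith
  have hc : 1 + 3 * Real.pi / 10 ≤ Real.exp (3 * Real.pi / 10) := by
    have := Real.add_one_le_exp (3 * Real.pi / 10)
    linarith
  set b := Real.exp (Real.pi / 2) with hbb
  set c := Real.exp (3 * Real.pi / 10) with hcc
  have hb0 : (2.5 : ℝ) ≤ b := by nlinarith
  have hc0 : (1.9 : ℝ) ≤ c := by nlinarith
  have hub : u ≤ b := Real.exp_le_exp.mpr ht1
  have hKey : Real.exp (9 * Real.pi / 5) = b ^ 3 * c := by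
    rw [hbb, hcc, show (9:ℝ) * Real.pi / 5
      = Real.pi / 2 + (Real.pi / 2 + (Real.pi / 2 + 3 * Real.pi / 10)) by ring,
      Real.exp_add, Real.exp_add, Real.exp_add]
    ring
  have hS : u ^ 3 + u ^ 2 + u + 1 ≤ Real.exp (9 * Real.pi / 5) := by
    rw [hKey]
    have hu0 : (1:ℝ) ≤ u := hu1.le
    have h2 : u ^ 2 ≤ b ^ 2 := by nlinarith
    have h3 : u ^ 3 ≤ b ^ 3 := by nlinarith
    nlinarith [h2, h3, sq_nonneg (b - 2.5), sq_nonneg b, mul_le_mul_of_nonneg_left hc0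
      (pow_nonneg (by linarith : (0:ℝ) ≤ b) 3)]
  have hD : 0 < (t + 1) * Real.exp (3 * Real.pi * r) - 1 := by
    rw [e3]
    have h3 : 1 < u ^ 3 := by nlinarith
    nlinarith [mul_pos ht0 (by linarith : (0:ℝ) < u ^ 3)]
  rw [ge_iff_le, le_div_iff₀ hD, e3]
  have hK0 : (0:ℝ) < Real.exp (9 * Real.pi / 5) := Real.exp_pos _
  have hneg : Real.exp (-(9 * Real.pi / 5)) = (Real.exp (9 * Real.pi / 5))⁻¹ := Real.exp_neg _
  rw [hneg, inv_mul_le_iff₀ hK0]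
  -- (t+1)u^3 - 1 ≤ u^4 - 1 = (u-1)(u^3+u^2+u+1) ≤ (u-1) * exp(9π/5)
  have h4 : (t + 1) * u ^ 3 - 1 ≤ (u - 1) * (u ^ 3 + u ^ 2 + u + 1) := by
    have hu3 : (0:ℝ) < u ^ 3 := pow_pos (lt_trans one_pos hu1) 3
    have hmul : (t + 1) * u ^ 3 ≤ u * u ^ 3 := mul_le_mul_of_nonneg_right hut hu3.le
    have hid : (u - 1) * (u ^ 3 + u ^ 2 + u + 1) = u * u ^ 3 - 1 := by ring
    linarith
  have h5 : (u - 1) * (u ^ 3 + u ^ 2 + u + 1) ≤ (u - 1) * Real.exp (9 * Real.pi / 5) := by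
    apply mul_le_mul_of_nonneg_left hS (by linarith)
  calc (t + 1) * u ^ 3 - 1 ≤ (u - 1) * Real.exp (9 * Real.pi / 5) := h4.trans h5
    _ = Real.exp (9 * Real.pi / 5) * (Real.exp t - 1) := by rw [hu]; ring
end

section
/- Define Y_r(w) = r·Re w + (i/(2π))·log|(e^{−3πr} − e^{−πri}e^{−2πri·w})/(e^{−3πr} − e^{πri})| for w in the closed half-plane {Im w ≥ −1}. Then for every r ∈ (0,1/2] and every w with Im w ≥ −1, Im Y_r(w) > −1; in particular Y_r maps {Im w ≥ −1} into the open half-plane {Im w > −1}. -/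
/-- `|1 - e^{iθ}| ≤ θ` for `θ ≥ 0`. -/
lemma abs_one_sub_exp_mul_I_le (θ : ℝ) (hθ : 0 ≤ θ) :
    Norm.norm (1 - Complex.exp ((θ:ℂ) * Complex.I)) ≤ θ := by
  have h1 : Complex.exp ((θ:ℂ) * Complex.I)
      = Complex.ofReal (Real.cos θ) + Complex.ofReal (Real.sin θ) * Complex.I := by
    rw [Complex.exp_mul_I, Complex.ofReal_cos, Complex.ofReal_sin]
  have h2 : (Norm.norm (1 - Complex.exp ((θ:ℂ) * Complex.I)))^2 = 2 - 2 * Real.cos θ := by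
    rw [Complex.sq_norm, h1]
    simp only [Complex.normSq_apply, Complex.sub_re, Complex.sub_im, Complex.add_re,
      Complex.add_im, Complex.mul_re, Complex.mul_im, Complex.I_re, Complex.I_im,
      Complex.ofReal_re, Complex.ofReal_im, Complex.one_re, Complex.one_im]
    nlinarith [Real.sin_sq_add_cos_sq θ]
  have h3 : 1 - θ^2/2 ≤ Real.cos θ := Real.one_sub_sq_div_two_le_cos
  nlinarith [norm_nonneg (1 - Complex.exp ((θ:ℂ) * Complex.I))]

lemma four_lt_exp_half_pi : (4:ℝ) < Real.exp (Real.pi / 2) := by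
  have h3 : (3:ℝ) < Real.pi := Real.pi_gt_three
  have e1 : (2.7182818283:ℝ) < Real.exp 1 := Real.exp_one_gt_d9
  have h32 : Real.exp (3/2) ^ 2 = Real.exp 3 := by
    rw [← Real.exp_nat_mul]; norm_num
  have h33 : Real.exp 3 = (Real.exp 1)^3 := by
    rw [← Real.exp_nat_mul]; norm_num
  have h4 : (4:ℝ) < Real.exp (3/2) := by
    have h19 : (19:ℝ) < Real.exp 1 ^ 3 := by
      have : (2.7:ℝ)^3 < Real.exp 1 ^ 3 :=
        pow_lt_pow_left₀ (by linarith) (by norm_num) (by norm_num)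
      nlinarith
    nlinarith [Real.exp_pos (3/2 : ℝ)]
  calc (4:ℝ) < Real.exp (3/2) := h4
    _ ≤ Real.exp (Real.pi / 2) := Real.exp_le_exp.mpr (by linarith)

/-- The model change of coordinate `Y_r`. -/
noncomputable def Yr (r : ℝ) (w : ℂ) : ℂ :=
  ((r * w.re : ℝ) : ℂ) +
    Complex.I / (2 * (Real.pi : ℂ)) *
      ((Real.log (Norm.norm
        ((((Real.exp (-3 * Real.pi * r) : ℝ) : ℂ) -
            Complex.exp (-(Real.pi * r : ℂ) * Complex.I) *
              Complex.exp (-(2 * Real.pi * r : ℂ) * Complex.I * w)) /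
          (((Real.exp (-3 * Real.pi * r) : ℝ) : ℂ) -
            Complex.exp ((Real.pi * r : ℂ) * Complex.I)))) : ℝ) : ℂ)

theorem stmt_3 (r : ℝ) (h0 : 0 < r) (h1 : r ≤ 1 / 2) :
    (∀ w : ℂ, w.im ≥ -1 → (Yr r w).im > -1) ∧
    Set.MapsTo (Yr r) {w : ℂ | w.im ≥ -1} {w : ℂ | w.im > -1} := by
  have pi_pos := Real.pi_pos
  have key : ∀ w : ℂ, w.im ≥ -1 → (Yr r w).im > -1 := by
    intro w hw
    set a : ℝ := Real.exp (-3 * Real.pi * r) with ha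
    set num : ℂ := ((a : ℝ) : ℂ) -
      Complex.exp (-(Real.pi * r : ℂ) * Complex.I) *
        Complex.exp (-(2 * Real.pi * r : ℂ) * Complex.I * w) with hnumdef
    set den : ℂ := ((a : ℝ) : ℂ) - Complex.exp ((Real.pi * r : ℂ) * Complex.I) with hdendef
    have ha_pos : 0 < a := Real.exp_pos _
    have ha_lt : a < 1 := by
      rw [ha]; apply Real.exp_lt_one_iff.mpr; nlinarith
    -- modulus of the exponential piece
    have habsB : Norm.norm (Complex.exp (-(Real.pi * r : ℂ) * Complex.I) *
        Complex.exp (-(2 * Real.pi * r : ℂ) * Complex.I * w))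
        = Real.exp (2 * Real.pi * r * w.im) := by
      rw [norm_mul, Complex.norm_exp, Complex.norm_exp, ← Real.exp_add]
      congr 1
      simp [Complex.mul_re, Complex.mul_im]
    -- lower bound on |num|
    have hnum_lb : Real.exp (-(2 * Real.pi * r)) - a ≤ Norm.norm num := by
      have h1 : Real.exp (-(2 * Real.pi * r)) ≤ Real.exp (2 * Real.pi * r * w.im) := by
        apply Real.exp_le_exp.mpr
        have := mul_le_mul_of_nonneg_left hw (by positivity : (0:ℝ) ≤ 2 * Real.pi * r)
        linarith
      have h2 := norm_sub_norm_le (Complex.exp (-(Real.pi * r : ℂ) * Complex.I) *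
        Complex.exp (-(2 * Real.pi * r : ℂ) * Complex.I * w)) (((a:ℝ):ℂ))
      rw [habsB,
        Complex.norm_real, Real.norm_eq_abs, abs_of_pos ha_pos] at h2
      have h3 : Norm.norm num = Norm.norm (Complex.exp (-(Real.pi * r : ℂ) * Complex.I) *
          Complex.exp (-(2 * Real.pi * r : ℂ) * Complex.I * w) - ((a:ℝ):ℂ)) := by
        rw [hnumdef, ← norm_neg]; ring_nf
      rw [h3]; linarith
    -- upper bound on |den|
    have hden_ub : Norm.norm den ≤ 4 * (Real.pi * r) := by
      have h1 : den = (((a:ℝ):ℂ) - 1) + (1 - Complex.exp ((Real.pi * r : ℂ) * Complex.I)) := by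
        rw [hdendef]; ring
      have h2 : Norm.norm (((a:ℝ):ℂ) - 1) = 1 - a := by
        rw [show ((a:ℝ):ℂ) - 1 = (((a - 1 : ℝ)):ℂ) by push_cast; ring, Complex.norm_real, Real.norm_eq_abs,
          abs_of_nonpos (by linarith)]
        ring
      have h3 : Norm.norm (1 - Complex.exp ((Real.pi * r : ℂ) * Complex.I)) ≤ Real.pi * r := by
        have := abs_one_sub_exp_mul_I_le (Real.pi * r) (by positivity)
        rw [show (((Real.pi * r : ℝ)):ℂ) = (Real.pi * r : ℂ) by push_cast; ring] at this
        exact this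
      have h4 : 1 - a ≤ 3 * (Real.pi * r) := by
        have := Real.add_one_le_exp (-3 * Real.pi * r)
        rw [← ha] at this; linarith
      calc Norm.norm den ≤ Norm.norm (((a:ℝ):ℂ) - 1) +
            Norm.norm (1 - Complex.exp ((Real.pi * r : ℂ) * Complex.I)) := by
            rw [h1]; exact norm_add_le _ _
        _ ≤ 3 * (Real.pi * r) + Real.pi * r := by rw [h2]; linarith
        _ = 4 * (Real.pi * r) := by ring
    -- |den| > 0
    have hden_pos : 0 < Norm.norm den := by
      have h2 := norm_sub_norm_le (Complex.exp ((Real.pi * r : ℂ) * Complex.I)) (((a:ℝ):ℂ))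
      have habs1 : Norm.norm (Complex.exp ((Real.pi * r : ℂ) * Complex.I)) = 1 := by
        rw [Complex.norm_exp]; simp [Complex.mul_re]
      have h3 : Norm.norm den = Norm.norm (Complex.exp ((Real.pi * r : ℂ) * Complex.I) - ((a:ℝ):ℂ)) := by
        rw [hdendef, ← norm_neg]; ring_nf
      rw [habs1,
        Complex.norm_real, Real.norm_eq_abs, abs_of_pos ha_pos] at h2
      rw [h3]; linarith
    -- key inequality : exp(-2π) * |den| < |num|
    have hkey : Real.exp (-(2 * Real.pi)) * Norm.norm den < Norm.norm num := by
      have e1 : Real.exp (-(2 * Real.pi)) * (4 * (Real.pi * r))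
          < Real.exp (-(3 * Real.pi / 2)) * (Real.pi * r) := by
        have h4 : Real.exp (-(2 * Real.pi)) * 4 < Real.exp (-(3 * Real.pi / 2)) := by
          have := four_lt_exp_half_pi
          have heq : Real.exp (-(2 * Real.pi)) * Real.exp (Real.pi / 2)
              = Real.exp (-(3 * Real.pi / 2)) := by
            rw [← Real.exp_add]; ring_nf
          nlinarith [Real.exp_pos (-(2 * Real.pi))]
        nlinarith [mul_pos pi_pos h0]
      have e2 : Real.exp (-(3 * Real.pi / 2)) * (Real.pi * r)
          ≤ Real.exp (-(2 * Real.pi * r)) - a := by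
        have h5 : a * (Real.pi * r) ≤ a * (Real.exp (Real.pi * r) - 1) := by
          have := Real.add_one_le_exp (Real.pi * r)
          nlinarith
        have h6 : a * (Real.exp (Real.pi * r) - 1) = Real.exp (-(2 * Real.pi * r)) - a := by
          rw [ha, mul_sub, ← Real.exp_add, mul_one]; ring_nf
        have h7 : Real.exp (-(3 * Real.pi / 2)) ≤ a := by
          rw [ha]; apply Real.exp_le_exp.mpr; nlinarith
        nlinarith [mul_pos pi_pos h0]
      calc Real.exp (-(2 * Real.pi)) * Norm.norm den
          ≤ Real.exp (-(2 * Real.pi)) * (4 * (Real.pi * r)) := by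
            apply mul_le_mul_of_nonneg_left hden_ub (Real.exp_pos _).le
        _ < Real.exp (-(3 * Real.pi / 2)) * (Real.pi * r) := e1
        _ ≤ Real.exp (-(2 * Real.pi * r)) - a := e2
        _ ≤ Norm.norm num := hnum_lb
    -- now the log bound
    have habs_div : Real.exp (-(2 * Real.pi)) < Norm.norm (num / den) := by
      rw [norm_div, lt_div_iff₀ hden_pos]
      exact hkey
    have hlog : -(2 * Real.pi) < Real.log (Norm.norm (num / den)) := by
      rw [Real.lt_log_iff_exp_lt (lt_trans (Real.exp_pos _) habs_div)]
      exact habs_div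
    have him : (Yr r w).im = Real.log (Norm.norm (num / den)) / (2 * Real.pi) := by
      rw [Yr, ← ha, ← hnumdef, ← hdendef]
      simp [Complex.div_im, Complex.add_im, Complex.mul_im, Complex.normSq_apply]
      ring
    rw [him, gt_iff_lt, show (-1 : ℝ) = -(2 * Real.pi) / (2 * Real.pi) by
      field_simp, div_lt_div_iff_of_pos_right (by positivity)]
    exact hlog
  exact ⟨key, fun w hw => key w hw⟩
end

section
/- For every r ∈ (0, 1/2] and all w₁, w₂ in the closed half-plane {Im w ≥ −1}, |Y_r(w₁) − Y_r(w₂)| ≤ 0.9·|w₁ − w₂|. -/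
open Complex

lemma hasFDerivAt_log_abs {g : ℂ → ℂ} {g' w : ℂ} (hg : HasDerivAt g g' w) (h0 : g w ≠ 0) :
    HasFDerivAt (fun z => Real.log (Norm.norm (g z)))
      (Complex.reCLM.comp ((g' / g w) • (1 : ℂ →L[ℝ] ℂ))) w := by
  have hfun : (fun z => Real.log (Norm.norm (g z)))
      = fun z => Real.log (Complex.normSq (g z)) / 2 := by
    funext z
    rw [Complex.norm_def, Real.log_sqrt (Complex.normSq_nonneg _)]
  rw [hfun]
  have hF : HasFDerivAt g ((ContinuousLinearMap.smulRight (1 : ℂ →L[ℂ] ℂ) g').restrictScalars ℝ) w :=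
    hg.hasFDerivAt.restrictScalars ℝ
  have hre : HasFDerivAt (fun z => (g z).re)
      (Complex.reCLM.comp ((ContinuousLinearMap.smulRight (1 : ℂ →L[ℂ] ℂ) g').restrictScalars ℝ)) w :=
    (Complex.reCLM.hasFDerivAt).comp w hF
  have him : HasFDerivAt (fun z => (g z).im)
      (Complex.imCLM.comp ((ContinuousLinearMap.smulRight (1 : ℂ →L[ℂ] ℂ) g').restrictScalars ℝ)) w :=
    (Complex.imCLM.hasFDerivAt).comp w hF
  have hns : HasFDerivAt (fun z => Complex.normSq (g z))
      ((g w).re • (Complex.reCLM.comp ((ContinuousLinearMap.smulRight (1 : ℂ →L[ℂ] ℂ) g').restrictScalars ℝ))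
        + (g w).re • (Complex.reCLM.comp ((ContinuousLinearMap.smulRight (1 : ℂ →L[ℂ] ℂ) g').restrictScalars ℝ))
        + ((g w).im • (Complex.imCLM.comp ((ContinuousLinearMap.smulRight (1 : ℂ →L[ℂ] ℂ) g').restrictScalars ℝ))
        + (g w).im • (Complex.imCLM.comp ((ContinuousLinearMap.smulRight (1 : ℂ →L[ℂ] ℂ) g').restrictScalars ℝ)))) w := by
    have : (fun z => Complex.normSq (g z)) = fun z => (g z).re * (g z).re + (g z).im * (g z).im := by
      funext z; simp [Complex.normSq_apply]
    rw [this]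
    exact (hre.mul hre).add (him.mul him)
  have hns0 : Complex.normSq (g w) ≠ 0 := by
    simpa [Complex.normSq_eq_zero] using h0
  have hlog := (hns.log hns0).const_smul (2⁻¹ : ℝ)
  have hfun2 : (fun z => Real.log (Complex.normSq (g z)) / 2)
      = fun z => (2⁻¹ : ℝ) • Real.log (Complex.normSq (g z)) := by
    funext z; simp [smul_eq_mul]; ring
  rw [hfun2]
  convert hlog using 1
  case e'_4 => rfl
  case e'_8 => rfl
  case e'_9 => rfl
  case e'_11 => rfl
  ext v
  have hv : ((ContinuousLinearMap.smulRight (1 : ℂ →L[ℂ] ℂ) g').restrictScalars ℝ) v = g' * v := by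
    simp [mul_comm]
  simp only [ContinuousLinearMap.coe_comp', Function.comp_apply, ContinuousLinearMap.smul_apply,
    ContinuousLinearMap.one_apply, ContinuousLinearMap.add_apply, Complex.reCLM_apply,
    Complex.imCLM_apply, ContinuousLinearMap.coe_smul', Pi.smul_apply, hv]
  rw [smul_eq_mul, div_mul_eq_mul_div, Complex.div_re]
  have hpos : 0 < Complex.normSq (g w) := Complex.normSq_pos.mpr h0
  rw [Complex.normSq_apply] at *
  field_simp [Complex.mul_re, Complex.mul_im]
  ring

noncomputable def qfun (r : ℝ) (w : ℂ) : ℂ :=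
  (2 * (Real.pi : ℂ) * r * Complex.I *
      (Complex.exp (-(Real.pi * r : ℂ) * Complex.I) *
        Complex.exp (-(2 * Real.pi * r : ℂ) * Complex.I * w))) /
    (((Real.exp (-3 * Real.pi * r) : ℝ) : ℂ) -
      Complex.exp (-(Real.pi * r : ℂ) * Complex.I) *
        Complex.exp (-(2 * Real.pi * r : ℂ) * Complex.I * w))

noncomputable def Tmap (r : ℝ) (q : ℂ) : ℂ →L[ℝ] ℂ :=
  Complex.ofRealCLM.comp (r • Complex.reCLM) +
    (Complex.I / (2 * (Real.pi : ℂ))) •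
      (Complex.ofRealCLM.comp (Complex.reCLM.comp (q • (1 : ℂ →L[ℝ] ℂ))))

lemma abs_u (r : ℝ) (w : ℂ) :
    Norm.norm (Complex.exp (-(2 * Real.pi * r : ℂ) * Complex.I * w))
      = Real.exp (2 * Real.pi * r * w.im) := by
  rw [Complex.norm_exp]
  congr 1
  simp [Complex.mul_re, Complex.mul_im]

lemma abs_c (r : ℝ) :
    Norm.norm (Complex.exp (-(Real.pi * r : ℂ) * Complex.I)) = 1 := by
  rw [Complex.norm_exp]
  norm_num [Complex.mul_re]

-- quantitative lower bound for the numerator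
lemma num_lb (r : ℝ) (h0 : 0 < r) (w : ℂ) (hw : -1 ≤ w.im) :
    Real.exp (2 * Real.pi * r * w.im) * (1 - Real.exp (-(Real.pi * r))) ≤
      Norm.norm (((Real.exp (-3 * Real.pi * r) : ℝ) : ℂ) -
        Complex.exp (-(Real.pi * r : ℂ) * Complex.I) *
          Complex.exp (-(2 * Real.pi * r : ℂ) * Complex.I * w)) := by
  have hπ := Real.pi_pos
  have h1 : Norm.norm (Complex.exp (-(Real.pi * r : ℂ) * Complex.I) *
        Complex.exp (-(2 * Real.pi * r : ℂ) * Complex.I * w)) -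
      Norm.norm (((Real.exp (-3 * Real.pi * r) : ℝ) : ℂ)) ≤
      Norm.norm (((Real.exp (-3 * Real.pi * r) : ℝ) : ℂ) -
        Complex.exp (-(Real.pi * r : ℂ) * Complex.I) *
          Complex.exp (-(2 * Real.pi * r : ℂ) * Complex.I * w)) := by
    rw [norm_sub_rev]
    exact norm_sub_norm_le _ _
  rw [norm_mul, abs_c, abs_u, one_mul, Complex.norm_real, Real.norm_eq_abs,
    abs_of_pos (Real.exp_pos _)] at h1
  refine le_trans ?_ h1
  have h2 : Real.exp (-3 * Real.pi * r)
      ≤ Real.exp (-(Real.pi * r)) * Real.exp (2 * Real.pi * r * w.im) := by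
    rw [← Real.exp_add]
    apply Real.exp_le_exp.mpr
    nlinarith [mul_le_mul_of_nonneg_left hw (by positivity : (0:ℝ) ≤ 2*Real.pi*r)]
  nlinarith [Real.exp_pos (2 * Real.pi * r * w.im)]

lemma num_ne (r : ℝ) (h0 : 0 < r) (w : ℂ) (hw : -1 ≤ w.im) :
    (((Real.exp (-3 * Real.pi * r) : ℝ) : ℂ) -
      Complex.exp (-(Real.pi * r : ℂ) * Complex.I) *
        Complex.exp (-(2 * Real.pi * r : ℂ) * Complex.I * w)) ≠ 0 := by
  have hπ := Real.pi_pos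
  have := num_lb r h0 w hw
  have ht : Real.exp (-(Real.pi * r)) < 1 := by
    rw [Real.exp_lt_one_iff]; nlinarith
  intro h
  rw [h, norm_zero] at this
  nlinarith [Real.exp_pos (2 * Real.pi * r * w.im)]

lemma den_ne (r : ℝ) (h0 : 0 < r) :
    (((Real.exp (-3 * Real.pi * r) : ℝ) : ℂ) -
      Complex.exp ((Real.pi * r : ℂ) * Complex.I)) ≠ 0 := by
  have hπ := Real.pi_pos
  intro h
  have h2 : ((Real.exp (-3 * Real.pi * r) : ℝ) : ℂ) = Complex.exp ((Real.pi * r : ℂ) * Complex.I) :=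
    by linear_combination h
  have h3 := congrArg Norm.norm h2
  rw [Complex.norm_real, Real.norm_eq_abs, Complex.norm_exp, abs_of_pos (Real.exp_pos _)] at h3
  have h4 : ((Real.pi * r : ℂ) * Complex.I).re = 0 := by
    norm_num [Complex.mul_re]
  rw [h4, Real.exp_zero] at h3
  have : Real.exp (-3 * Real.pi * r) < 1 := by
    rw [Real.exp_lt_one_iff]; nlinarith
  linarith [h3.ge, this]

lemma yr_deriv (r : ℝ) (h0 : 0 < r) (w : ℂ) (hw : -1 ≤ w.im) :
    HasFDerivAt (Yr r) (Tmap r (qfun r w)) w := by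
  have hD := den_ne r h0
  have hN := num_ne r h0 w hw
  -- derivative of numerator
  have hNd : HasDerivAt (fun z : ℂ =>
      (((Real.exp (-3 * Real.pi * r) : ℝ) : ℂ) -
        Complex.exp (-(Real.pi * r : ℂ) * Complex.I) *
          Complex.exp (-(2 * Real.pi * r : ℂ) * Complex.I * z)))
      (-(Complex.exp (-(Real.pi * r : ℂ) * Complex.I) *
          (Complex.exp (-(2 * Real.pi * r : ℂ) * Complex.I * w) *
            (-(2 * Real.pi * r : ℂ) * Complex.I * 1)))) w := by
    have h1 : HasDerivAt (fun z : ℂ => -(2 * Real.pi * r : ℂ) * Complex.I * z)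
        (-(2 * Real.pi * r : ℂ) * Complex.I * 1) w :=
      (hasDerivAt_id w).const_mul _
    exact ((h1.cexp).const_mul _).const_sub _
  have hG : HasDerivAt (fun z : ℂ =>
      ((((Real.exp (-3 * Real.pi * r) : ℝ) : ℂ) -
          Complex.exp (-(Real.pi * r : ℂ) * Complex.I) *
            Complex.exp (-(2 * Real.pi * r : ℂ) * Complex.I * z)) /
        (((Real.exp (-3 * Real.pi * r) : ℝ) : ℂ) -
          Complex.exp ((Real.pi * r : ℂ) * Complex.I))))
      ((-(Complex.exp (-(Real.pi * r : ℂ) * Complex.I) *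
          (Complex.exp (-(2 * Real.pi * r : ℂ) * Complex.I * w) *
            (-(2 * Real.pi * r : ℂ) * Complex.I * 1)))) /
        (((Real.exp (-3 * Real.pi * r) : ℝ) : ℂ) -
          Complex.exp ((Real.pi * r : ℂ) * Complex.I))) w := hNd.div_const _
  have hG0 : ((((Real.exp (-3 * Real.pi * r) : ℝ) : ℂ) -
          Complex.exp (-(Real.pi * r : ℂ) * Complex.I) *
            Complex.exp (-(2 * Real.pi * r : ℂ) * Complex.I * w)) /
        (((Real.exp (-3 * Real.pi * r) : ℝ) : ℂ) -
          Complex.exp ((Real.pi * r : ℂ) * Complex.I))) ≠ 0 :=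
    div_ne_zero hN hD
  have hlog := hasFDerivAt_log_abs hG hG0
  have hlog2 := ((Complex.ofRealCLM.hasFDerivAt.comp w hlog).const_mul
    (Complex.I / (2 * (Real.pi : ℂ))))
  have hlin : HasFDerivAt (fun z : ℂ => ((r * z.re : ℝ) : ℂ))
      (Complex.ofRealCLM.comp (r • Complex.reCLM)) w := by
    have := (Complex.ofRealCLM.comp (r • Complex.reCLM)).hasFDerivAt (x := w)
    convert this using 1
    rfl
  have := hlin.add hlog2
  convert this using 1
  case e'_4 => rfl
  case e'_8 => rfl
  case e'_11 => rfl
  have key : ∀ (a b d : ℂ), d ≠ 0 → a / d / (b / d) = a / b := by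
    intro a b d hd; field_simp
  rw [key _ _ _ hD]
  have hq2 : (-(Complex.exp (-(Real.pi * r : ℂ) * Complex.I) *
          (Complex.exp (-(2 * Real.pi * r : ℂ) * Complex.I * w) *
            (-(2 * Real.pi * r : ℂ) * Complex.I * 1)))) /
        ((((Real.exp (-3 * Real.pi * r) : ℝ) : ℂ) -
          Complex.exp (-(Real.pi * r : ℂ) * Complex.I) *
            Complex.exp (-(2 * Real.pi * r : ℂ) * Complex.I * w))) = qfun r w := by
    rw [qfun]
    congr 1
    ring
  rw [hq2]
  rfl

lemma exp_half_pi : Real.exp (-(Real.pi/2)) ≤ 1/4 := by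
  have h1 : (4:ℝ) ≤ Real.exp (Real.pi/2) := by
    have h2 : Real.exp (3/2 : ℝ) ≤ Real.exp (Real.pi/2) := by
      apply Real.exp_le_exp.mpr
      linarith [Real.pi_gt_three]
    have h3 : Real.exp (3/2 : ℝ) = Real.exp 1 * Real.exp (1/2 : ℝ) := by
      rw [← Real.exp_add]; norm_num
    have h4 : (1.5 : ℝ) ≤ Real.exp (1/2 : ℝ) := by
      nlinarith [Real.add_one_le_exp (1/2 : ℝ)]
    have h5 := Real.exp_one_gt_d9
    nlinarith [Real.exp_pos (1/2 : ℝ)]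
  rw [Real.exp_neg]
  rw [inv_le_comm₀ (Real.exp_pos _) (by norm_num)]
  linarith

lemma one_sub_exp (r : ℝ) (h0 : 0 < r) (h1 : r ≤ 1/2) :
    3/2 * r ≤ 1 - Real.exp (-(Real.pi * r)) := by
  have hconv := convexOn_exp.2 (Set.mem_univ (0:ℝ)) (Set.mem_univ (-(Real.pi/2)))
    (by linarith : (0:ℝ) ≤ 1 - 2*r) (by linarith : (0:ℝ) ≤ 2*r) (by ring)
  simp only [smul_eq_mul, Real.exp_zero, mul_zero, mul_one, zero_add] at hconv
  have he : (2*r) * -(Real.pi/2) = -(Real.pi * r) := by ring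
  rw [he] at hconv
  have := exp_half_pi
  nlinarith

lemma q_bound (r : ℝ) (h0 : 0 < r) (h1 : r ≤ 1/2) (w : ℂ) (hw : -1 ≤ w.im) :
    Norm.norm (qfun r w) ≤ 4 * Real.pi / 3 := by
  have hπ := Real.pi_pos
  have hden := num_lb r h0 w hw
  have hU := Real.exp_pos (2 * Real.pi * r * w.im)
  have ht : 3/2 * r ≤ 1 - Real.exp (-(Real.pi * r)) := one_sub_exp r h0 h1
  have hdenpos : 0 < Real.exp (2 * Real.pi * r * w.im) * (1 - Real.exp (-(Real.pi * r))) := by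
    apply mul_pos hU; nlinarith
  rw [qfun, norm_div]
  have hnum : Norm.norm (2 * (Real.pi : ℂ) * r * Complex.I *
      (Complex.exp (-(Real.pi * r : ℂ) * Complex.I) *
        Complex.exp (-(2 * Real.pi * r : ℂ) * Complex.I * w)))
      = 2 * Real.pi * r * Real.exp (2 * Real.pi * r * w.im) := by
    simp only [norm_mul]
    rw [abs_c, abs_u, Complex.norm_I, Complex.norm_real, Real.norm_eq_abs, Complex.norm_real, Real.norm_eq_abs, Complex.norm_two]
    rw [abs_of_pos hπ, abs_of_pos h0]
    ring
  rw [hnum]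
  have hstep : 2 * Real.pi * r * Real.exp (2 * Real.pi * r * w.im) /
      Norm.norm (((Real.exp (-3 * Real.pi * r) : ℝ) : ℂ) -
        Complex.exp (-(Real.pi * r : ℂ) * Complex.I) *
          Complex.exp (-(2 * Real.pi * r : ℂ) * Complex.I * w))
      ≤ 2 * Real.pi * r * Real.exp (2 * Real.pi * r * w.im) /
        (Real.exp (2 * Real.pi * r * w.im) * (1 - Real.exp (-(Real.pi * r)))) := by
    apply div_le_div_of_nonneg_left _ hdenpos hden
    positivity
  refine hstep.trans ?_
  rw [div_le_iff₀ hdenpos]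
  have h32 : 3/2 * r ≤ 1 - Real.exp (-(Real.pi * r)) := ht
  nlinarith [mul_pos hπ hU, mul_pos (mul_pos hπ h0) hU]

lemma T_norm (r : ℝ) (h0 : 0 < r) (h1 : r ≤ 1/2) (q : ℂ)
    (hq : Norm.norm q ≤ 4 * Real.pi / 3) : ‖Tmap r q‖ ≤ 9/10 := by
  have hπ := Real.pi_pos
  apply ContinuousLinearMap.opNorm_le_bound _ (by norm_num)
  intro v
  have hTv : Tmap r q v = ((r * v.re : ℝ) : ℂ) + (((q * v).re / (2 * Real.pi) : ℝ) : ℂ) * Complex.I := by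
    simp only [Tmap, ContinuousLinearMap.add_apply, ContinuousLinearMap.coe_comp',
      Function.comp_apply, ContinuousLinearMap.coe_smul', Pi.smul_apply,
      ContinuousLinearMap.smul_apply, ContinuousLinearMap.one_apply, Complex.reCLM_apply,
      Complex.ofRealCLM_apply, smul_eq_mul]
    congr 1
    push_cast
    have : ((2:ℂ) * Real.pi) ≠ 0 := by
      simp [Complex.ext_iff]
    field_simp
  rw [hTv, Complex.norm_add_mul_I]
  set A := Norm.norm v with hA
  have hA0 : 0 ≤ A := norm_nonneg v
  have hre : (v.re)^2 ≤ A^2 := by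
    have := Complex.abs_re_le_norm v
    nlinarith [abs_nonneg v.re, le_abs_self v.re, neg_abs_le v.re]
  have hb : ((q*v).re)^2 ≤ (4 * Real.pi / 3)^2 * A^2 := by
    have h2 := Complex.abs_re_le_norm (q*v)
    have h3 : Norm.norm (q*v) = Norm.norm q * A := by rw [norm_mul]
    have h4 : Norm.norm (q*v) ≤ (4 * Real.pi / 3) * A := by
      rw [h3]; apply mul_le_mul_of_nonneg_right hq hA0
    nlinarith [abs_nonneg (q*v).re, le_abs_self (q*v).re, neg_abs_le (q*v).re,
      norm_nonneg (q*v)]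
  have key : (r * v.re)^2 + ((q*v).re / (2*Real.pi))^2 ≤ (9/10 * A)^2 := by
    have h2 : ((q*v).re / (2*Real.pi))^2 = ((q*v).re)^2 / (2*Real.pi)^2 := by
      rw [div_pow]
    rw [h2]
    have h3 : ((q*v).re)^2 / (2*Real.pi)^2 ≤ 4/9 * A^2 := by
      rw [div_le_iff₀ (by positivity)]
      nlinarith
    have h4 : (r * v.re)^2 ≤ 1/4 * A^2 := by
      have hr2 : r^2 ≤ 1/4 := by nlinarith
      have h5 := mul_le_mul hr2 hre (sq_nonneg v.re) (by norm_num : (0:ℝ) ≤ 1/4)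
      calc (r*v.re)^2 = r^2 * v.re^2 := by ring
        _ ≤ 1/4 * A^2 := h5
    nlinarith
  calc Real.sqrt ((r * v.re)^2 + ((q*v).re / (2*Real.pi))^2)
      ≤ Real.sqrt ((9/10 * A)^2) := Real.sqrt_le_sqrt key
    _ = 9/10 * A := Real.sqrt_sq (by positivity)

theorem stmt_5 (r : ℝ) (h0 : 0 < r) (h1 : r ≤ 1 / 2) (w₁ w₂ : ℂ)
    (hw₁ : w₁.im ≥ -1) (hw₂ : w₂.im ≥ -1) :
    Norm.norm (Yr r w₁ - Yr r w₂) ≤ (9 / 10 : ℝ) * Norm.norm (w₁ - w₂) := by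
  have key := (convex_halfSpace_im_ge (-1)).norm_image_sub_le_of_norm_hasFDerivWithin_le
    (f := Yr r) (f' := fun w => Tmap r (qfun r w)) (C := 9/10)
    (fun x hx => (yr_deriv r h0 x hx).hasFDerivWithinAt)
    (fun x hx => T_norm r h0 h1 (qfun r x) (q_bound r h0 h1 x hx))
    hw₂ hw₁
  simpa using key
end

section
/- For all real r ≥ 0, r·(e^{πr}+1)/(e^{πr}−1) ≤ (2πr + π²r² + 4)/(2π + π²r), with the left side interpreted by continuity at r = 0; moreover for r ∈ (0, 1/2] this quantity is at most 9/10. -/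
lemma exp_quad (x : ℝ) (hx : 0 ≤ x) : 1 + x + x ^ 2 / 2 ≤ Real.exp x := by
  have h := Real.sum_le_exp_of_nonneg hx 3
  simp [Finset.sum_range_succ, Nat.factorial] at h
  nlinarith [h]

theorem stmt_6 (r : ℝ) (hr : 0 ≤ r) :
    (if r = 0 then 2 / Real.pi
      else r * (Real.exp (Real.pi * r) + 1) / (Real.exp (Real.pi * r) - 1)) ≤
      (2 * Real.pi * r + Real.pi ^ 2 * r ^ 2 + 4) / (2 * Real.pi + Real.pi ^ 2 * r) ∧
    (0 < r → r ≤ 1 / 2 →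
      r * (Real.exp (Real.pi * r) + 1) / (Real.exp (Real.pi * r) - 1) ≤ 9 / 10) := by
  have hpi := Real.pi_pos
  have hpi1 : 3.141592 < Real.pi := Real.pi_gt_d6
  have hpi2 : Real.pi < 3.1416 := Real.pi_lt_d4
  constructor
  · rcases eq_or_lt_of_le hr with h0 | h0
    · rw [if_pos h0.symm, ← h0]
      rw [div_le_div_iff₀ hpi (by positivity)]
      ring_nf
      nlinarith
    · rw [if_neg h0.ne']
      have hx : 0 ≤ Real.pi * r := by positivity
      have hE := exp_quad _ hx
      have hE1 : 1 < Real.exp (Real.pi * r) := by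
        have := Real.add_one_le_exp (Real.pi * r)
        nlinarith
      rw [div_le_div_iff₀ (by linarith) (by positivity)]
      nlinarith [hE, mul_pos hpi h0]
  · intro h0 hhalf
    have hx : 0 ≤ Real.pi * r := by positivity
    have hE := exp_quad _ hx
    have hE1 : 1 < Real.exp (Real.pi * r) := by
      have := Real.add_one_le_exp (Real.pi * r)
      nlinarith
    rw [div_le_iff₀ (by linarith)]
    nlinarith [mul_le_mul_of_nonneg_right hE (show (0:ℝ) ≤ 9 - 10*r by linarith),
      mul_nonneg (mul_nonneg (mul_nonneg hpi.le hpi.le) h0.le)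
        (show (0:ℝ) ≤ 1/2 - r by linarith), mul_pos hpi h0, sq_nonneg r]
end

section
/- Let r₁ ∈ (1/2, 1), r₂ = 1/r₁ − 1 ∈ (0,1), and r = r₁·r₂ ∈ (0, 1/2). Then for all real y ≥ e², one has |h_r^{−1}(y) − h_{r₁}^{−1}(h_{r₂}^{−1}(y))| ≤ 1 + e^{−1}. -/
/-- The inverse of the Herman comparison function `h_s`. -/
noncomputable def hfunInv (s : ℝ) (y : ℝ) : ℝ :=
  if 1 / s ≤ y then s * y + Real.log (1 / s) - 1 else Real.log y

lemma aux_log_le_exp2_mul (t : ℝ) (ht : 0 < t) :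
    Real.log t ≤ Real.exp 2 * t - 3 := by
  have h := Real.log_le_sub_one_of_pos (mul_pos (Real.exp_pos 2) ht)
  rw [Real.log_mul (ne_of_gt (Real.exp_pos 2)) (ne_of_gt ht), Real.log_exp] at h
  linarith

lemma aux_log_le_mul_exp_neg_one (t : ℝ) (ht : 0 < t) :
    Real.log t ≤ t * Real.exp (-1) := by
  have h := Real.log_le_sub_one_of_pos (mul_pos ht (Real.exp_pos (-1)))
  rw [Real.log_mul (ne_of_gt ht) (ne_of_gt (Real.exp_pos _)), Real.log_exp] at h
  linarith

theorem stmt_12 (r₁ : ℝ) (h₁ : 1 / 2 < r₁) (h₂ : r₁ < 1) (y : ℝ) (hy : Real.exp 2 ≤ y) :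
    |hfunInv (r₁ * (1 / r₁ - 1)) y - hfunInv r₁ (hfunInv (1 / r₁ - 1) y)| ≤
      1 + Real.exp (-1) := by
  have hr1 : (0:ℝ) < r₁ := by linarith
  have hr1ne : r₁ ≠ 0 := ne_of_gt hr1
  set r₂ : ℝ := 1 / r₁ - 1 with hr₂def
  have hr₂pos : 0 < r₂ := by
    have h : 1 < 1 / r₁ := by rw [lt_div_iff₀ hr1]; linarith
    simp only [hr₂def]; linarith
  have hr₂lt : r₂ < 1 := by
    have h : 1 / r₁ < 2 := by rw [div_lt_iff₀ hr1]; linarith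
    simp only [hr₂def]; linarith
  have hr₂ne : r₂ ≠ 0 := ne_of_gt hr₂pos
  have hrr : r₁ * r₂ = 1 - r₁ := by
    rw [hr₂def, mul_sub, mul_one_div_cancel hr1ne, mul_one]
  have hrpos : 0 < r₁ * r₂ := mul_pos hr1 hr₂pos
  have hy0 : 0 < y := lt_of_lt_of_le (Real.exp_pos 2) hy
  have hlogy : 2 ≤ Real.log y := by
    have h := Real.log_le_log (Real.exp_pos 2) hy
    rwa [Real.log_exp] at h
  -- log r₂ ≤ 0 and related facts
  have hlogr₂ : Real.log r₂ ≤ 0 := Real.log_nonpos (le_of_lt hr₂pos) (le_of_lt hr₂lt)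
  have hnn : 0 ≤ (1 - r₁) * (-Real.log r₂) := by nlinarith
  have hlogr₁neg : Real.log r₁ ≤ 0 := Real.log_nonpos (le_of_lt hr1) (le_of_lt h₂)
  have hlog2 : Real.log 2 < 1 := by
    have := Real.log_two_lt_d9; linarith
  have hlogr₁ : -Real.log 2 < Real.log r₁ := by
    have h := Real.log_lt_log (by norm_num : (0:ℝ) < 1/2) h₁
    rwa [one_div, Real.log_inv] at h
  -- Key inequality: (1-r₁) * (-log r₂) ≤ e⁻¹
  have hK : (1 - r₁) * (-Real.log r₂) ≤ Real.exp (-1) := by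
    have h1 : Real.log (r₁ * r₂) ≤ Real.log r₂ :=
      Real.log_le_log hrpos (by nlinarith)
    have h2 : Real.log ((r₁*r₂)⁻¹) ≤ (r₁*r₂)⁻¹ * Real.exp (-1) :=
      aux_log_le_mul_exp_neg_one _ (by positivity)
    rw [Real.log_inv] at h2
    have h3 : (r₁*r₂) * (-Real.log (r₁*r₂)) ≤ Real.exp (-1) := by
      have := mul_le_mul_of_nonneg_left h2 (le_of_lt hrpos)
      calc (r₁*r₂) * (-Real.log (r₁*r₂)) ≤ (r₁*r₂) * ((r₁*r₂)⁻¹ * Real.exp (-1)) := this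
        _ = Real.exp (-1) := by field_simp
    nlinarith [mul_le_mul_of_nonneg_left (neg_le_neg h1) (le_of_lt hrpos)]
  -- the inner value is at least 2
  have hz : 2 ≤ hfunInv r₂ y := by
    unfold hfunInv
    split_ifs with h
    · have hl := aux_log_le_exp2_mul r₂ hr₂pos
      rw [one_div, Real.log_inv]
      nlinarith [mul_le_mul_of_nonneg_left hy (le_of_lt hr₂pos)]
    · exact hlogy
  -- the outer application is always linear
  have hcond : 1 / r₁ ≤ hfunInv r₂ y := by
    have h : 1 / r₁ < 2 := by rw [div_lt_iff₀ hr1]; linarith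
    linarith
  have hB : hfunInv r₁ (hfunInv r₂ y) = r₁ * hfunInv r₂ y - Real.log r₁ - 1 := by
    rw [hfunInv, if_pos hcond, one_div, Real.log_inv]
    ring
  rw [hB]
  by_cases hyin : 1 / r₂ ≤ y
  · have hzval : hfunInv r₂ y = r₂ * y - Real.log r₂ - 1 := by
      simp only [hfunInv]
      rw [if_pos hyin, one_div, Real.log_inv]
      ring
    rw [hzval]
    by_cases hyout : 1 / (r₁ * r₂) ≤ y
    · -- both linear
      have hAval : hfunInv (r₁*r₂) y = (r₁*r₂)*y - Real.log (r₁*r₂) - 1 := by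
        simp only [hfunInv]
        rw [if_pos hyout, one_div, Real.log_inv]
        ring
      rw [hAval, Real.log_mul hr1ne hr₂ne, abs_le]
      constructor
      · linarith [hnn, Real.exp_pos (-1)]
      · linarith [hK]
    · -- A = log y, inner linear
      have hAval : hfunInv (r₁*r₂) y = Real.log y := by
        simp only [hfunInv]
        rw [if_neg hyout]
      rw [hAval, abs_le]
      push_neg at hyout
      have hylt : (r₁*r₂) * y < 1 := by
        have h := (lt_div_iff₀ hrpos).mp hyout
        linarith
      have hylog : -Real.log r₂ ≤ Real.log y := by
        have h := Real.log_le_log (by positivity : (0:ℝ) < 1/r₂) hyin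
        rwa [one_div, Real.log_inv] at h
      have htang : Real.log y ≤ -Real.log r₁ - Real.log r₂ + (r₁*r₂)*y - 1 := by
        have h := Real.log_le_sub_one_of_pos (mul_pos hrpos hy0)
        rw [Real.log_mul (ne_of_gt hrpos) (ne_of_gt hy0),
          Real.log_mul hr1ne hr₂ne] at h
        linarith
      constructor
      · linarith [hylog, hylt, hnn, hlogr₁, hlog2, Real.exp_pos (-1)]
      · linarith [htang, hK]
  · -- inner log branch; then also outer-left is log branch
    have hyout : ¬ (1 / (r₁ * r₂) ≤ y) := by
      push_neg at hyin ⊢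
      have h : 1 / r₂ ≤ 1 / (r₁ * r₂) := by
        rw [div_le_div_iff₀ hr₂pos hrpos]
        nlinarith
      linarith
    have hAval : hfunInv (r₁*r₂) y = Real.log y := by
      simp only [hfunInv]
      rw [if_neg hyout]
    have hzval : hfunInv r₂ y = Real.log y := by
      simp only [hfunInv]
      rw [if_neg hyin]
    rw [hAval, hzval, abs_le]
    push_neg at hyin
    have hylog : Real.log y ≤ -Real.log r₂ := by
      have h := Real.log_le_log hy0 (le_of_lt hyin)
      rwa [one_div, Real.log_inv] at h
    have hm1 : (1 - r₁) * Real.log y ≤ (1 - r₁) * (-Real.log r₂) :=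
      mul_le_mul_of_nonneg_left hylog (by linarith)
    have hm2 : 0 ≤ (1 - r₁) * Real.log y :=
      mul_nonneg (by linarith) (by linarith)
    constructor
    · linarith [hm2, hlogr₁, hlog2, Real.exp_pos (-1)]
    · linarith [hm1, hK, hlogr₁neg]
end

section
/- Let α be irrational, and define α₀ = dist(α, ℤ) and α_{n+1} = dist(1/α_n, ℤ), with integers a_n ≥ 2 and signs ε_{n+1} ∈ {±1} determined by 1/α_n = a_n + ε_{n+1}·α_{n+1}. Let (β̃_n) be the products of the standard continued-fraction entries α̃_n of α (α̃₀ = frac(α), α̃_{n+1} = frac(1/α̃_n)), and let c(−1) = −1, c(n) = −1 + Σ_{i=0}^{n} (3 − ε_i)/2. Then for all n ≥ −1: if ε_{n+1} = −1 then α_{n+1} = 1 − α̃_{c(n)+1}, and if ε_{n+1} = +1 then α_{n+1} = α̃_{c(n)+1}. -/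
/-- Distance to the nearest integer. -/
noncomputable def dZ (x : ℝ) : ℝ := |x - round x|

/-- The nearest-integer (modified) continued fraction entries `α_n`. -/
noncomputable def nicf (α : ℝ) : ℕ → ℝ
  | 0 => dZ α
  | n + 1 => dZ (1 / nicf α n)

/-- The signs `ε_n` of the nearest-integer continued fraction. -/
noncomputable def eps (α : ℝ) : ℕ → ℤ
  | 0 => if 0 < α - round α then 1 else -1
  | n + 1 => if 0 < 1 / nicf α n - round (1 / nicf α n) then 1 else -1

/-- The standard continued fraction entries `α̃_n`. -/
noncomputable def scf (α : ℝ) : ℕ → ℝ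
  | 0 => Int.fract α
  | n + 1 => Int.fract (1 / scf α n)

/-- `dfun α m = c(m-1) + 1` where `c` is the index-matching sequence,
`c(-1) = -1`, `c(n) = -1 + ∑_{i=0}^{n} (3 - ε_i)/2`. -/
noncomputable def dfun (α : ℝ) : ℕ → ℕ
  | 0 => 0
  | m + 1 => dfun α m + (if eps α m = 1 then 1 else 2)

lemma dZ_eq_fract {x : ℝ} (h : 0 < x - round x) : dZ x = Int.fract x := by
  have h1 := abs_sub_round x
  have hle : |x - round x| ≤ 1/2 := h1
  have hb := abs_le.mp hle
  have hfl : ⌊x⌋ = round x := by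
    rw [Int.floor_eq_iff]
    constructor <;> push_cast <;> linarith [hb.1, hb.2]
  rw [dZ, Int.fract, hfl, abs_of_pos h]

lemma dZ_eq_one_sub_fract {x : ℝ} (hx : Irrational x) (h : ¬ 0 < x - round x) :
    dZ x = 1 - Int.fract x := by
  have hne : x ≠ (round x : ℝ) := hx.ne_int (round x)
  have hlt : x - round x < 0 := lt_of_le_of_ne (not_lt.mp h) (sub_ne_zero.mpr hne)
  have hb := abs_le.mp (abs_sub_round x)
  have hfl : ⌊x⌋ = round x - 1 := by
    rw [Int.floor_eq_iff]
    constructor <;> push_cast <;> linarith [hb.1, hb.2]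
  rw [dZ, Int.fract, hfl, abs_of_neg hlt]
  push_cast
  ring

lemma dZ_irr {x : ℝ} (hx : Irrational x) : Irrational (dZ x) := by
  have h1 : Irrational (x - round x) := hx.sub_intCast (round x)
  rcases abs_choice (x - round x) with h | h <;> rw [dZ, h]
  · exact h1
  · exact h1.neg

lemma dZ_pos {x : ℝ} (hx : Irrational x) : 0 < dZ x := by
  have hne : x ≠ (round x : ℝ) := hx.ne_int (round x)
  exact abs_pos.mpr (sub_ne_zero.mpr hne)

lemma dZ_lt_half {x : ℝ} (hx : Irrational x) : dZ x < 1/2 := by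
  rcases lt_or_eq_of_le (abs_sub_round x) with h | h
  · exact h
  · exfalso
    have h1 : Irrational (x - round x) := hx.sub_intCast (round x)
    rcases abs_choice (x - round x) with h2 | h2 <;> rw [h2] at h
    · exact h1 ⟨1/2, by rw [h]; norm_num⟩
    · exact h1.neg ⟨1/2, by rw [h]; norm_num⟩

lemma nicf_props (α : ℝ) (hα : Irrational α) (m : ℕ) :
    Irrational (nicf α m) ∧ 0 < nicf α m ∧ nicf α m < 1/2 := by
  induction m with
  | zero => exact ⟨dZ_irr hα, dZ_pos hα, dZ_lt_half hα⟩
  | succ n ih =>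
    have hinv : Irrational (1 / nicf α n) := by
      rw [one_div]; exact ih.1.inv
    exact ⟨dZ_irr hinv, dZ_pos hinv, dZ_lt_half hinv⟩

lemma scf_props (α : ℝ) (hα : Irrational α) (d : ℕ) :
    Irrational (scf α d) ∧ 0 < scf α d ∧ scf α d < 1 := by
  induction d with
  | zero =>
    refine ⟨?_, ?_, Int.fract_lt_one α⟩
    · show Irrational (α - (⌊α⌋ : ℝ)); exact hα.sub_intCast ⌊α⌋
    · rw [show scf α 0 = Int.fract α from rfl, Int.fract_pos]; exact hα.ne_int ⌊α⌋
  | succ n ih =>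
    have hinv : Irrational (1 / scf α n) := by rw [one_div]; exact ih.1.inv
    refine ⟨?_, ?_, Int.fract_lt_one _⟩
    · show Irrational (1 / scf α n - (⌊1 / scf α n⌋ : ℝ)); exact hinv.sub_intCast _
    · rw [show scf α (n+1) = Int.fract (1 / scf α n) from rfl, Int.fract_pos]
      exact hinv.ne_int _

lemma eps_eq (α : ℝ) (n : ℕ) : eps α n = 1 ∨ eps α n = -1 := by
  cases n with
  | zero => by_cases h : 0 < α - round α
            · left; simp [eps, h]
            · right; simp [eps, h]
  | succ k => by_cases h : 0 < 1 / nicf α k - round (1 / nicf α k)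
              · left; rw [show eps α (k+1) = if 0 < 1 / nicf α k - round (1 / nicf α k) then 1 else -1 from rfl, if_pos h]
              · right; rw [show eps α (k+1) = if 0 < 1 / nicf α k - round (1 / nicf α k) then 1 else -1 from rfl, if_neg h]

theorem stmt_13 (α : ℝ) (hα : Irrational α) (m : ℕ) :
    (eps α m = -1 → nicf α m = 1 - scf α (dfun α m)) ∧
    (eps α m = 1 → nicf α m = scf α (dfun α m)) := by
  induction m with
  | zero =>
    show ((if 0 < α - round α then (1:ℤ) else -1) = -1 → dZ α = 1 - Int.fract α) ∧
      ((if 0 < α - round α then (1:ℤ) else -1) = 1 → dZ α = Int.fract α)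
    by_cases h : 0 < α - round α
    · simp only [h, if_pos]
      exact ⟨fun hc => by norm_num at hc, fun _ => dZ_eq_fract h⟩
    · simp only [h, if_neg, if_false]
      exact ⟨fun _ => dZ_eq_one_sub_fract hα h, fun hc => by norm_num at hc⟩
  | succ n ih =>
    have hnp := nicf_props α hα n
    have hsp := scf_props α hα (dfun α n)
    set d := dfun α n with hd
    have heps : eps α (n+1) = if 0 < 1 / nicf α n - round (1 / nicf α n) then 1 else -1 := rfl
    have hnic : nicf α (n+1) = dZ (1 / nicf α n) := rfl
    by_cases he : eps α n = 1
    · -- previous sign +1 : nicf α n = scf α d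
      have hval : nicf α n = scf α d := ih.2 he
      have hdf : dfun α (n+1) = d + 1 := by simp [dfun, he, hd]
      have hscf1 : scf α (d+1) = Int.fract (1 / scf α d) := rfl
      have hinv : Irrational (1 / nicf α n) := by rw [one_div]; exact hnp.1.inv
      constructor
      · intro hne
        by_cases hc : 0 < 1 / nicf α n - round (1 / nicf α n)
        · rw [heps] at hne
          rw [if_pos hc] at hne; exact absurd hne (by norm_num)
        · rw [hnic, hdf, dZ_eq_one_sub_fract hinv hc, hscf1, hval]
      · intro hpe
        by_cases hc : 0 < 1 / nicf α n - round (1 / nicf α n)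
        · rw [hnic, hdf, dZ_eq_fract hc, hscf1, hval]
        · rw [heps] at hpe
          rw [if_neg hc] at hpe; exact absurd hpe (by norm_num)
    · -- previous sign -1 : nicf α n = 1 - scf α d
      have hem : eps α n = -1 := (eps_eq α n).resolve_left he
      have hval : nicf α n = 1 - scf α d := ih.1 hem
      have hdf : dfun α (n+1) = d + 2 := by simp [dfun, he, hd]
      set t := scf α d with ht
      have ht1 : 1/2 < t := by
        have := hnp.2.2; rw [hval] at this; linarith
      have ht2 : t < 1 := hsp.2.2
      have ht0 : 0 < t := hsp.2.1
      -- scf α (d+1) = (1-t)/t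
      have hfl1 : ⌊1/t⌋ = 1 := by
        rw [Int.floor_eq_iff]
        constructor
        · push_cast
          rw [le_div_iff₀ ht0]; linarith
        · push_cast
          rw [div_lt_iff₀ ht0]; linarith
      have hscf1 : scf α (d+1) = 1/t - 1 := by
        show Int.fract (1 / scf α d) = 1/t - 1
        rw [← ht, Int.fract, hfl1]; push_cast; ring
      have hs1pos : 0 < scf α (d+1) := (scf_props α hα (d+1)).2.1
      have hs1ne : scf α (d+1) ≠ 0 := ne_of_gt hs1pos
      -- key identity : 1 / nicf α n = 1 / scf α (d+1) + 1
      have hkey : 1 / nicf α n = 1 / scf α (d+1) + 1 := by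
        rw [hval, hscf1]
        have h1t : (1:ℝ) - t ≠ 0 := by intro h; rw [sub_eq_zero] at h; linarith
        have htne : t ≠ 0 := ne_of_gt ht0
        field_simp
        ring
      have hscf2 : scf α (d+2) = Int.fract (1 / scf α (d+1)) := rfl
      have hy : Irrational (1 / scf α (d+1)) := by
        rw [one_div]; exact (scf_props α hα (d+1)).1.inv
      have hround : round (1 / nicf α n) = round (1 / scf α (d+1)) + 1 := by
        rw [hkey, show (1:ℝ) = ((1:ℤ):ℝ) by norm_num, round_add_intCast]
      have hsub : 1 / nicf α n - round (1 / nicf α n)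
          = 1 / scf α (d+1) - round (1 / scf α (d+1)) := by
        rw [hround, hkey]; push_cast; ring
      have hdZeq : dZ (1 / nicf α n) = dZ (1 / scf α (d+1)) := by
        rw [dZ, dZ, hsub]
      constructor
      · intro hne
        by_cases hc : 0 < 1 / nicf α n - round (1 / nicf α n)
        · rw [heps] at hne
          rw [if_pos hc] at hne; exact absurd hne (by norm_num)
        · have hc' : ¬ 0 < 1 / scf α (d+1) - round (1 / scf α (d+1)) := by
            rw [← hsub]; exact hc
          rw [hnic, hdf, hdZeq, dZ_eq_one_sub_fract hy hc', ← hscf2]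
      · intro hpe
        by_cases hc : 0 < 1 / nicf α n - round (1 / nicf α n)
        · have hc' : 0 < 1 / scf α (d+1) - round (1 / scf α (d+1)) := by
            rw [← hsub]; exact hc
          rw [hnic, hdf, hdZeq, dZ_eq_fract hc', ← hscf2]
        · rw [heps] at hpe
          rw [if_neg hc] at hpe; exact absurd hpe (by norm_num)
end

section
/- Define the (modified) Brjuno function B(α) = Σ_{n=0}^{∞} β_{n−1}·log(1/α_n), where α_n are the nearest-integer continued fraction entries of the irrational α, β_{−1} = 1, β_n = ∏_{i=0}^{n} α_i. Then B satisfies the functional equations B(α) = B(α+1) = B(−α) for all irrational α, and B(α) = α·B(1/α) + log(1/α) for all irrational α ∈ (0, 1/2). -/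
/-- `beta α n = β_{n-1} = ∏_{i=0}^{n-1} α_i`, with `beta α 0 = β_{-1} = 1`. -/
noncomputable def beta (α : ℝ) (n : ℕ) : ℝ := ∏ i ∈ Finset.range n, nicf α i

/-- The (modified) Brjuno function `B(α) = ∑_{n≥0} β_{n-1} log(1/α_n)`,
with values in `(0, +∞]`. -/
noncomputable def brjuno (α : ℝ) : ENNReal :=
  ∑' n : ℕ, ENNReal.ofReal (beta α n * Real.log (1 / nicf α n))

lemma dZ_add_one (x : ℝ) : dZ (x + 1) = dZ x := by
  have : round (x + (1 : ℤ)) = round x + 1 := round_add_intCast x 1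
  simp only [dZ]
  push_cast at this
  rw [this]
  congr 1
  push_cast
  ring

lemma dZ_neg (x : ℝ) : dZ (-x) = dZ x := by
  simp only [dZ, abs_sub_round_eq_min]
  by_cases h : Int.fract x = 0
  · obtain ⟨n, hn⟩ := Int.fract_eq_iff.mp h |>.2.2
    simp at hn
    have : x = (n : ℝ) := by linarith
    subst this
    rw [← Int.cast_neg, Int.fract_intCast, h]
  · rw [Int.fract_neg h]
    rw [min_comm]
    ring_nf

lemma nicf_congr {a b : ℝ} (h : dZ a = dZ b) : ∀ n, nicf a n = nicf b n := by
  intro n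
  induction n with
  | zero => exact h
  | succ k ih => simp only [nicf, ih]

lemma brjuno_congr {a b : ℝ} (h : ∀ n, nicf a n = nicf b n) : brjuno a = brjuno b := by
  unfold brjuno beta
  congr 1
  funext n
  simp only [h]

set_option linter.unusedVariables false in
theorem stmt_15 (α : ℝ) (hα : Irrational α) :
    brjuno (α + 1) = brjuno α ∧ brjuno (-α) = brjuno α ∧
    (α ∈ Set.Ioo (0 : ℝ) (1 / 2) →
      brjuno α = ENNReal.ofReal α * brjuno (1 / α) + ENNReal.ofReal (Real.log (1 / α))) := by
  refine ⟨brjuno_congr (nicf_congr (dZ_add_one α)), brjuno_congr (nicf_congr (dZ_neg α)), ?_⟩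
  rintro ⟨h0, h2⟩
  have hr : round α = 0 := round_eq_zero_iff.mpr ⟨by linarith, h2⟩
  have hdZ : dZ α = α := by simp [dZ, hr, abs_of_pos h0]
  have hn0 : nicf α 0 = α := hdZ
  have key : ∀ n, nicf (1 / α) n = nicf α (n + 1) := by
    intro n
    induction n with
    | zero => show dZ (1 / α) = dZ (1 / dZ α); rw [hdZ]
    | succ k ih => simp only [nicf, ih]
  have hbeta : ∀ n, beta α (n + 1) = α * beta (1 / α) n := by
    intro n
    unfold beta
    rw [Finset.prod_range_succ']
    rw [hn0, mul_comm]
    congr 1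
    exact Finset.prod_congr rfl fun i _ => (key i).symm
  have hsplit : brjuno α = ENNReal.ofReal (beta α 0 * Real.log (1 / nicf α 0)) +
      ∑' n : ℕ, ENNReal.ofReal (beta α (n + 1) * Real.log (1 / nicf α (n + 1))) := by
    unfold brjuno
    exact tsum_eq_zero_add' ENNReal.summable
  rw [hsplit]
  have h1 : beta α 0 = 1 := by simp [beta]
  rw [h1, hn0, one_mul, add_comm]
  congr 1
  have : ∀ n : ℕ, ENNReal.ofReal (beta α (n + 1) * Real.log (1 / nicf α (n + 1))) =
      ENNReal.ofReal α * ENNReal.ofReal (beta (1 / α) n * Real.log (1 / nicf (1 / α) n)) := by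
    intro n
    rw [hbeta n, key n, mul_assoc, ENNReal.ofReal_mul h0.le]
  simp_rw [this]
  rw [ENNReal.tsum_mul_left]
  rfl
end
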